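/- If a trajectory q : [0,T] → 𝕢 satisfies the global stability condition ℰ(t, q(t)) ≤ ℰ(t, q̃) + 𝒟(q(t), q̃) for all t ∈ [0,T] and all q̃ ∈ 𝕢, and if θ ↦ ∂_t ℰ(θ, q(s)) is continuous in θ, then the lower energy inequality holds: for all 0 ≤ s ≤ t ≤ T, ℰ(t, q(t)) + Var(𝒟, q; s, t) ≥ ℰ(s, q(s)) + ∫_s^t ∂_t ℰ(θ, q(θ)) dθ, provided (t,q) ↦ ∂_t ℰ(t,q) is suitably uniformly continuous along the trajectory. -/

import Mathlib

open MeasureTheory Filter Topology Set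
open scoped RealInnerProductSpace ENNReal NNReal

noncomputable section

abbrev E3 : Type := EuclideanSpace ℝ (Fin 3)
abbrev Mat3 : Type := Matrix (Fin 3) (Fin 3) ℝ

def gradMat (y : E3 → E3) (x : E3) : Mat3 :=
  Matrix.of fun i j => fderiv ℝ y x (EuclideanSpace.single j 1) i

def detGrad (y : E3 → E3) (x : E3) : ℝ := (gradMat y x).det

def cof (F : Mat3) : Mat3 := (Matrix.adjugate F).transpose

def matNorm (F : Mat3) : ℝ := Real.sqrt (∑ i, ∑ j, (F i j)^2)

def gradCol (m : E3 → E3) (j : Fin 3) (z : E3) : E3 :=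
  fderiv ℝ m z (EuclideanSpace.single j 1)

def IsLipschitzDomain (Ω : Set E3) : Prop :=
  IsOpen Ω ∧ Bornology.IsBounded Ω ∧
  ∀ x ∈ frontier Ω, ∃ (U : Set E3) (v : E3) (L : NNReal) (φ : E3 → ℝ),
    IsOpen U ∧ x ∈ U ∧ LipschitzWith L φ ∧
    ∀ z ∈ U, (z ∈ Ω ↔ φ z < ⟪v, z⟫)

def MemW1p (A : Set E3) (p : ℝ≥0∞) (y : E3 → E3) : Prop :=
  (∀ᵐ x ∂(volume.restrict A), DifferentiableAt ℝ y x) ∧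
  MemLp y p (volume.restrict A) ∧
  MemLp (fun x => fderiv ℝ y x) p (volume.restrict A)

def defConfig (Ω : Set E3) (y : E3 → E3) : Set E3 :=
  y '' (closure Ω) \ y '' (frontier Ω)

def MemY (Ω Γ₀ : Set E3) (p : ℝ) (y : E3 → E3) : Prop :=
  MemW1p Ω (ENNReal.ofReal p) y ∧
  ContinuousOn y (closure Ω) ∧
  (∀ᵐ x ∂(volume.restrict Ω), detGrad y x = 1) ∧
  (∀ x ∈ Γ₀, y x = 0) ∧
  volume (defConfig Ω y) = volume Ω

def MemM (Ω : Set E3) (y : E3 → E3) (m : E3 → E3) : Prop :=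
  MemW1p (defConfig Ω y) 2 m ∧
  ∀ᵐ z ∂(volume.restrict (defConfig Ω y)), ‖m z‖ = 1

def WeakLp (A : Set E3) (q : ℝ) (f : ℕ → E3 → E3) (g : E3 → E3) : Prop :=
  ∀ φ : E3 → E3, MemLp φ (ENNReal.ofReal q) (volume.restrict A) →
    Tendsto (fun k => ∫ x in A, ⟪f k x, φ x⟫) atTop (𝓝 (∫ x in A, ⟪g x, φ x⟫))

def WeakW1p (A : Set E3) (q : ℝ) (f : ℕ → E3 → E3) (g : E3 → E3) : Prop :=
  WeakLp A q f g ∧ ∀ j : Fin 3, WeakLp A q (fun k => gradCol (f k) j) (gradCol g j)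

def StrongL2 (f : ℕ → E3 → E3) (g : E3 → E3) : Prop :=
  Tendsto (fun k => eLpNorm (fun z => f k z - g z) 2 volume) atTop (𝓝 0)

def WeakL2 (f : ℕ → E3 → E3) (g : E3 → E3) : Prop :=
  ∀ φ : E3 → E3, MemLp φ 2 volume →
    Tendsto (fun k => ∫ z, ⟪f k z, φ z⟫) atTop (𝓝 (∫ z, ⟪g z, φ z⟫))


/-- The set of partition sums defining the total 𝒟-variation of `q` on `[s,t]`. -/
def varSums {X : Type*} (D : X → X → ℝ) (q : ℝ → X) (s t : ℝ) : Set ℝ :=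
  {r | ∃ (J : ℕ) (τ : ℕ → ℝ), Monotone τ ∧ τ 0 = s ∧ τ J = t ∧
    (∀ i ≤ J, τ i ∈ Set.Icc s t) ∧
    r = ∑ i ∈ Finset.range J, D (q (τ i)) (q (τ (i+1)))}

/-! Along a partition `τ` of `[s, t]` of small mesh, test the stability of `q (τ i)` with the
competitor `q (τ (i+1))`: the energy of the fixed state `q (τ (i+1))` grows on `[τ i, τ (i+1)]`
by `∫ ∂ₜℰ(θ, q (τ (i+1))) dθ`, which by uniform continuity is `∫ ∂ₜℰ(θ, q θ) dθ` up to an error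
`ε (τ (i+1) - τ i)`. Summing, the energies telescope and the dissipations add up to a partition
sum of the variation. -/

lemma exists_partition_mesh_le {s t δ : ℝ} (hst : s ≤ t) (hδ : 0 < δ) :
    ∃ (N : ℕ) (τ : ℕ → ℝ), Monotone τ ∧ τ 0 = s ∧ τ N = t ∧ (∀ i, τ i ∈ Icc s t) ∧
      ∀ i, τ (i + 1) - τ i ≤ δ := by
  refine ⟨⌈(t - s) / δ⌉₊, fun i => min t (s + i * δ), ?_, ?_, ?_, ?_, ?_⟩
  · intro i j hij
    have : (i : ℝ) * δ ≤ j * δ := by gcongr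
    exact min_le_min_left t (by linarith)
  · simp [hst]
  · have : t - s ≤ ⌈(t - s) / δ⌉₊ * δ := (div_le_iff₀ hδ).mp (Nat.le_ceil _)
    exact min_eq_left (by linarith)
  · intro i
    have : 0 ≤ (i : ℝ) * δ := by positivity
    exact ⟨le_min hst (by linarith), min_le_left _ _⟩
  · intro i
    have : min t (s + (i + 1 : ℕ) * δ) ≤ min t (s + i * δ) + δ := by
      push_cast
      rw [← min_add_add_right]
      exact min_le_min (by linarith) (by linarith)
    linarith

lemma integral_le_sub_add_mul_of_le_deriv_add {e g f : ℝ → ℝ} {a b ε : ℝ} (hab : a ≤ b)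
    (he : ∀ x ∈ uIcc a b, HasDerivAt e (g x) x) (hg : IntervalIntegrable g volume a b)
    (hf : IntervalIntegrable f volume a b) (hfg : ∀ x ∈ Icc a b, f x ≤ g x + ε) :
    ∫ x in a..b, f x ≤ e b - e a + ε * (b - a) :=
  calc ∫ x in a..b, f x
      ≤ ∫ x in a..b, (g x + ε) :=
        intervalIntegral.integral_mono_on hab hf (hg.add intervalIntegrable_const) hfg
    _ = e b - e a + ε * (b - a) := by
        rw [intervalIntegral.integral_add hg intervalIntegrable_const,
          intervalIntegral.integral_eq_sub_of_hasDerivAt he hg, intervalIntegral.integral_const,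
          smul_eq_mul, mul_comm]

lemma integral_le_of_partition {f : ℝ → ℝ} {τ : ℕ → ℝ} {N : ℕ} (e d : ℕ → ℝ) (c : ℝ)
    (hf : ∀ i < N, IntervalIntegrable f volume (τ i) (τ (i + 1)))
    (hstep : ∀ i < N,
      ∫ x in τ i..τ (i + 1), f x ≤ e (i + 1) - e i + d i + c * (τ (i + 1) - τ i)) :
    ∫ x in τ 0..τ N, f x ≤ e N - e 0 + ∑ i ∈ Finset.range N, d i + c * (τ N - τ 0) :=
  calc ∫ x in τ 0..τ N, f x
      = ∑ i ∈ Finset.range N, ∫ x in τ i..τ (i + 1), f x :=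
        (intervalIntegral.sum_integral_adjacent_intervals hf).symm
    _ ≤ ∑ i ∈ Finset.range N, (e (i + 1) - e i + d i + c * (τ (i + 1) - τ i)) :=
        Finset.sum_le_sum fun i hi => hstep i (Finset.mem_range.mp hi)
    _ = e N - e 0 + ∑ i ∈ Finset.range N, d i + c * (τ N - τ 0) := by
        rw [Finset.sum_add_distrib, Finset.sum_add_distrib, ← Finset.mul_sum,
          Finset.sum_range_sub, Finset.sum_range_sub]

lemma integral_deriv_le_of_stable {Q : Type*} {E DE : ℝ → Q → ℝ} {D : Q → Q → ℝ} {q : ℝ → Q}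
    {a b ε : ℝ} (hab : a ≤ b) (hstab : E a (q a) ≤ E a (q b) + D (q a) (q b))
    (hderiv : ∀ θ, HasDerivAt (fun s => E s (q b)) (DE θ (q b)) θ)
    (hcont : Continuous fun θ => DE θ (q b))
    (hint : IntervalIntegrable (fun θ => DE θ (q θ)) volume a b)
    (hnear : ∀ θ ∈ Icc a b, DE θ (q θ) ≤ DE θ (q b) + ε) :
    ∫ θ in a..b, DE θ (q θ) ≤ E b (q b) - E a (q a) + D (q a) (q b) + ε * (b - a) := by
  have := integral_le_sub_add_mul_of_le_deriv_add hab (fun θ _ => hderiv θ)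
    (hcont.intervalIntegrable a b) hint hnear
  linarith

theorem stmt_16_general {Q : Type*} (E DE : ℝ → Q → ℝ) (D : Q → Q → ℝ)
    (T : ℝ) (q : ℝ → Q)
    (hstab : ∀ t ∈ Set.Icc (0:ℝ) T, ∀ qt, E t (q t) ≤ E t qt + D (q t) qt)
    (hderiv : ∀ (p : Q) (t : ℝ), HasDerivAt (fun s => E s p) (DE t p) t)
    (hcont : ∀ p : Q, Continuous fun θ => DE θ p)
    (hint : ∀ s t : ℝ, IntervalIntegrable (fun θ => DE θ (q θ)) volume s t)
    (hU : ∀ ε > 0, ∃ δ > 0, ∀ σ τ : ℝ, σ ∈ Set.Icc (0:ℝ) T → τ ∈ Set.Icc (0:ℝ) T →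
      |σ - τ| ≤ δ → ∀ θ ∈ Set.Icc (0:ℝ) T, |DE θ (q σ) - DE θ (q τ)| ≤ ε)
    (s t : ℝ) (hs : 0 ≤ s) (hst : s ≤ t) (htT : t ≤ T)
    (hbdd : BddAbove (varSums D q s t)) :
    E s (q s) + ∫ θ in s..t, DE θ (q θ) ≤ E t (q t) + sSup (varSums D q s t) := by
  refine le_of_forall_pos_le_add fun ε hε => ?_
  -- `t - s` itself may vanish
  set ε' := ε / (t - s + 1)
  have hε' : ε' * (t - s) ≤ ε := by
    rw [div_mul_eq_mul_div, div_le_iff₀ (by linarith)]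
    nlinarith
  obtain ⟨δ, hδ, hclose⟩ := hU ε' (by positivity)
  obtain ⟨N, τ, hmono, hτ0, hτN, hτst, hmesh⟩ := exists_partition_mesh_le hst hδ
  have hτ : ∀ i, τ i ∈ Icc 0 T := fun i => ⟨hs.trans (hτst i).1, (hτst i).2.trans htT⟩
  have hstep : ∀ i < N, ∫ θ in τ i..τ (i + 1), DE θ (q θ) ≤ E (τ (i + 1)) (q (τ (i + 1)))
      - E (τ i) (q (τ i)) + D (q (τ i)) (q (τ (i + 1))) + ε' * (τ (i + 1) - τ i) := by
    refine fun i _ => integral_deriv_le_of_stable (hmono (Nat.le_succ i))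
      (hstab _ (hτ i) _) (hderiv _) (hcont _) (hint _ _) fun θ hθ => ?_
    have hθT : θ ∈ Icc 0 T := ⟨(hτ i).1.trans hθ.1, hθ.2.trans (hτ (i + 1)).2⟩
    have := hclose θ (τ (i + 1)) hθT (hτ (i + 1))
      (by rw [abs_le]; constructor <;> linarith [hmesh i, hθ.1, hθ.2]) θ hθT
    linarith [(abs_le.mp this).2]
  have hsum := integral_le_of_partition (fun i => E (τ i) (q (τ i)))
    (fun i => D (q (τ i)) (q (τ (i + 1)))) ε' (fun i _ => hint _ _) hstep
  have hvar : ∑ i ∈ Finset.range N, D (q (τ i)) (q (τ (i + 1))) ≤ sSup (varSums D q s t) :=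
    le_csSup hbdd ⟨N, τ, hmono, hτ0, hτN, fun i _ => hτst i, rfl⟩
  rw [hτ0, hτN] at hsum
  linarith

/-- lower energy inequality for globally stable trajectories. -/
theorem stmt_16 {Q : Type*} (E DE : ℝ → Q → ℝ) (D : Q → Q → ℝ)
    (hDnn : ∀ q₁ q₂, 0 ≤ D q₁ q₂)
    (hDtri : ∀ q₁ q₂ q₃, D q₁ q₃ ≤ D q₁ q₂ + D q₂ q₃)
    (T : ℝ) (hT : 0 ≤ T) (q : ℝ → Q)
    (hstab : ∀ t ∈ Set.Icc (0:ℝ) T, ∀ qt, E t (q t) ≤ E t qt + D (q t) qt)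
    (hderiv : ∀ (p : Q) (t : ℝ), HasDerivAt (fun s => E s p) (DE t p) t)
    (hcont : ∀ p : Q, Continuous fun θ => DE θ p)
    (hint : ∀ s t : ℝ, IntervalIntegrable (fun θ => DE θ (q θ)) volume s t)
    (hU : ∀ ε > 0, ∃ δ > 0, ∀ σ τ : ℝ, σ ∈ Set.Icc (0:ℝ) T → τ ∈ Set.Icc (0:ℝ) T →
      |σ - τ| ≤ δ → ∀ θ ∈ Set.Icc (0:ℝ) T, |DE θ (q σ) - DE θ (q τ)| ≤ ε)
    (s t : ℝ) (hs : 0 ≤ s) (hst : s ≤ t) (htT : t ≤ T)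
    (hbdd : BddAbove (varSums D q s t)) :
    E s (q s) + ∫ θ in s..t, DE θ (q θ) ≤ E t (q t) + sSup (varSums D q s t) :=
  stmt_16_general E DE D T q hstab hderiv hcont hint hU s t hs hst htT hbdd

end
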